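/- Let (Ω, 𝓕, P) be a probability space, let (𝓕_t)_{t=0}^{n} be a filtration, let A_1, …, A_n be events with A_t ∈ 𝓕_t for each t, and let p₀ ∈ (0, 1/4] be such that for every t ∈ {1, …, n}, E[1_{A_t} ∣ 𝓕_{t−1}] ≤ p₀ almost surely. Then P( ∑_{t=1}^{n} 1_{A_t} ≥ n/4 ) ≤ exp( −n · kl(1/4, p₀) ). -/

import Mathlib

open MeasureTheory

/-- Kullback–Leibler divergence between Bernoulli distributions of parameters `p` and `q`
(the convention `0 · log(0/x) = 0` holds automatically since `0 * x = 0` in `ℝ`). -/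
noncomputable def klBer (p q : ℝ) : ℝ :=
  p * Real.log (p / q) + (1 - p) * Real.log ((1 - p) / (1 - q))

/-! Tilt by `θ ≥ 0`: by convexity of `exp`, `exp (θ * ∑ X t)` is dominated by the product of the
linear factors `1 + (exp θ - 1) * X t`, and peeling off one factor at a time with the pull-out
property of `μ[· | ℱ (t - 1)]` bounds the mean of that product by `(1 + (exp θ - 1) * p) ^ n`.
Markov's inequality at level `exp (θ * n * q)` with the optimal tilt
`exp θ = q (1 - p) / (p (1 - q))` turns this into `exp (-n * kl(q, p))`. -/

open ProbabilityTheory Real Finset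

lemma Real.exp_mul_le_one_add_mul {x : ℝ} (hx : x ∈ Set.Icc (0 : ℝ) 1) (θ : ℝ) :
    exp (θ * x) ≤ 1 + (exp θ - 1) * x :=
  calc exp (θ * x) = exp ((1 - x) • 0 + x • θ) := by simp [mul_comm]
    _ ≤ (1 - x) • exp 0 + x • exp θ :=
      convexOn_exp.2 (Set.mem_univ _) (Set.mem_univ _) (sub_nonneg.2 hx.2) hx.1 (by ring)
    _ = 1 + (exp θ - 1) * x := by simp only [smul_eq_mul, exp_zero]; ring

lemma klBer_eq_mul_log_sub_log {p q : ℝ} (hp0 : 0 < p) (hp1 : p < 1) (hq0 : 0 < q) (hq1 : q < 1) :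
    klBer q p = q * log (q * (1 - p) / (p * (1 - q)))
      - log (1 + (q * (1 - p) / (p * (1 - q)) - 1) * p) := by
  have hp1' : 0 < 1 - p := sub_pos.2 hp1
  have hq1' : 0 < 1 - q := sub_pos.2 hq1
  have hmgf : 1 + (q * (1 - p) / (p * (1 - q)) - 1) * p = (1 - p) / (1 - q) := by
    field_simp; ring
  rw [hmgf, klBer, log_div hq0.ne' hp0.ne', log_div hq1'.ne' hp1'.ne', log_div hp1'.ne' hq1'.ne',
    log_div (by positivity) (by positivity), log_mul hq0.ne' hp1'.ne', log_mul hp0.ne' hq1'.ne']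
  ring

section Tilt

variable {Ω : Type*} {m0 : MeasurableSpace Ω} {μ : Measure Ω}

lemma integral_mul_le_of_condExp_le [IsFiniteMeasure μ] {m : MeasurableSpace Ω} (hm : m ≤ m0)
    {Y g : Ω → ℝ} {p : ℝ} (hY : StronglyMeasurable[m] Y) (hY0 : 0 ≤ᵐ[μ] Y)
    (hYi : Integrable Y μ) (hg : Integrable g μ) (hYg : Integrable (Y * g) μ)
    (hcond : ∀ᵐ ω ∂μ, μ[g | m] ω ≤ p) :
    ∫ ω, Y ω * g ω ∂μ ≤ p * ∫ ω, Y ω ∂μ := by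
  have hpull := condExp_mul_of_stronglyMeasurable_left hY hYg hg
  calc ∫ ω, Y ω * g ω ∂μ = ∫ ω, μ[Y * g | m] ω ∂μ := (integral_condExp hm).symm
    _ = ∫ ω, Y ω * μ[g | m] ω ∂μ := integral_congr_ae hpull
    _ ≤ ∫ ω, Y ω * p ∂μ := by
      refine integral_mono_ae (integrable_condExp.congr hpull) (hYi.mul_const p) ?_
      filter_upwards [hY0, hcond] with ω hω0 hω
      exact mul_le_mul_of_nonneg_left hω hω0
    _ = p * ∫ ω, Y ω ∂μ := by rw [integral_mul_const, mul_comm]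

def tiltProd (s : ℝ) (X : ℕ → Ω → ℝ) (k : ℕ) (ω : Ω) : ℝ :=
  ∏ t ∈ Icc 1 k, (1 + s * X t ω)

variable {s : ℝ} {X : ℕ → Ω → ℝ}

lemma tiltProd_succ (k : ℕ) (ω : Ω) :
    tiltProd s X (k + 1) ω = tiltProd s X k ω * (1 + s * X (k + 1) ω) :=
  prod_Icc_succ_top (by omega) _

lemma tiltProd_nonneg (hs : 0 ≤ s) (hX : ∀ t ω, 0 ≤ X t ω) (k : ℕ) (ω : Ω) :
    0 ≤ tiltProd s X k ω :=
  prod_nonneg fun t _ => by nlinarith [hX t ω]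

lemma tiltProd_le_pow (hs : 0 ≤ s) (hX : ∀ t ω, X t ω ∈ Set.Icc (0 : ℝ) 1) (k : ℕ) (ω : Ω) :
    tiltProd s X k ω ≤ (1 + s) ^ k :=
  calc tiltProd s X k ω ≤ ∏ _t ∈ Icc 1 k, (1 + s) :=
        prod_le_prod (fun t _ => by nlinarith [(hX t ω).1]) fun t _ => by nlinarith [(hX t ω).2]
    _ = (1 + s) ^ k := by simp

lemma stronglyMeasurable_tiltProd (ℱ : Filtration ℕ m0) {k : ℕ}
    (hadapt : ∀ t, 1 ≤ t → t ≤ k → StronglyMeasurable[ℱ t] (X t)) :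
    StronglyMeasurable[ℱ k] (tiltProd s X k) := by
  refine Finset.stronglyMeasurable_fun_prod _ fun t ht => ?_
  obtain ⟨ht1, htk⟩ := mem_Icc.1 ht
  exact stronglyMeasurable_const.add
    (stronglyMeasurable_const.mul ((hadapt t ht1 htk).mono (ℱ.mono htk)))

lemma integrable_tiltProd [IsFiniteMeasure μ] (ℱ : Filtration ℕ m0) {k : ℕ} (hs : 0 ≤ s)
    (hX : ∀ t ω, X t ω ∈ Set.Icc (0 : ℝ) 1)
    (hadapt : ∀ t, 1 ≤ t → t ≤ k → StronglyMeasurable[ℱ t] (X t)) :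
    Integrable (tiltProd s X k) μ :=
  .of_bound ((stronglyMeasurable_tiltProd ℱ hadapt).mono (ℱ.le k)).aestronglyMeasurable
    ((1 + s) ^ k) <| ae_of_all _ fun ω => by
      rw [norm_of_nonneg (tiltProd_nonneg hs (fun t ω => (hX t ω).1) k ω)]
      exact tiltProd_le_pow hs hX k ω

lemma integral_tiltProd_le [IsProbabilityMeasure μ] (ℱ : Filtration ℕ m0) {n : ℕ} {p : ℝ}
    (hs : 0 ≤ s) (hp : 0 ≤ p) (hX : ∀ t ω, X t ω ∈ Set.Icc (0 : ℝ) 1)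
    (hadapt : ∀ t, 1 ≤ t → t ≤ n → StronglyMeasurable[ℱ t] (X t))
    (hcond : ∀ t, 1 ≤ t → t ≤ n → ∀ᵐ ω ∂μ, μ[X t | ℱ (t - 1)] ω ≤ p) :
    ∫ ω, tiltProd s X n ω ∂μ ≤ (1 + s * p) ^ n := by
  induction n with
  | zero => simp [tiltProd]
  | succ k ih =>
    have hadapt_k : ∀ t, 1 ≤ t → t ≤ k → StronglyMeasurable[ℱ t] (X t) :=
      fun t ht1 htk => hadapt t ht1 (by omega)
    have hX_le : ∀ᵐ ω ∂μ, ‖X (k + 1) ω‖ ≤ 1 :=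
      ae_of_all _ fun ω => by rw [norm_of_nonneg (hX _ ω).1]; exact (hX _ ω).2
    have hXm : AEStronglyMeasurable (X (k + 1)) μ :=
      ((hadapt (k + 1) (by omega) le_rfl).mono (ℱ.le _)).aestronglyMeasurable
    have hY := integrable_tiltProd (μ := μ) ℱ hs hX hadapt_k
    have hYX : Integrable (tiltProd s X k * X (k + 1)) μ := hY.mul_bdd hXm hX_le
    have hstep : ∫ ω, tiltProd s X k ω * X (k + 1) ω ∂μ ≤ p * ∫ ω, tiltProd s X k ω ∂μ :=
      integral_mul_le_of_condExp_le (ℱ.le k) (stronglyMeasurable_tiltProd ℱ hadapt_k)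
        (ae_of_all _ (tiltProd_nonneg hs (fun t ω => (hX t ω).1) k)) hY
        (.of_bound hXm 1 hX_le) hYX (by simpa using hcond (k + 1) (by omega) le_rfl)
    have hprev := ih hadapt_k fun t ht1 htk => hcond t ht1 (by omega)
    calc ∫ ω, tiltProd s X (k + 1) ω ∂μ
        = ∫ ω, tiltProd s X k ω ∂μ + s * ∫ ω, tiltProd s X k ω * X (k + 1) ω ∂μ := by
          simp_rw [tiltProd_succ, mul_add, mul_one, mul_left_comm _ s]
          exact (integral_add hY (hYX.const_mul s)).trans (congrArg _ (integral_const_mul _ _))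
      _ ≤ (1 + s * p) * ∫ ω, tiltProd s X k ω ∂μ := by
          linarith [mul_le_mul_of_nonneg_left hstep hs]
      _ ≤ (1 + s * p) * (1 + s * p) ^ k := by gcongr
      _ = (1 + s * p) ^ (k + 1) := by ring

lemma exp_mul_sum_le_tiltProd (hX : ∀ t ω, X t ω ∈ Set.Icc (0 : ℝ) 1) (θ : ℝ) (k : ℕ) (ω : Ω) :
    exp (θ * ∑ t ∈ Icc 1 k, X t ω) ≤ tiltProd (exp θ - 1) X k ω := by
  rw [mul_sum, exp_sum]
  exact prod_le_prod (fun _ _ => (exp_pos _).le) fun t _ => exp_mul_le_one_add_mul (hX t ω) θ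

end Tilt

section Chernoff

variable {Ω : Type*} {m0 : MeasurableSpace Ω} {μ : Measure Ω} [IsProbabilityMeasure μ]
  {ℱ : Filtration ℕ m0} {X : ℕ → Ω → ℝ} {n : ℕ}

lemma integrable_exp_mul_sum {θ : ℝ} (hθ : 0 ≤ θ) (hX : ∀ t ω, X t ω ∈ Set.Icc (0 : ℝ) 1)
    (hadapt : ∀ t, 1 ≤ t → t ≤ n → StronglyMeasurable[ℱ t] (X t)) :
    Integrable (fun ω => exp (θ * ∑ t ∈ Icc 1 n, X t ω)) μ := by
  have hsum : StronglyMeasurable fun ω => ∑ t ∈ Icc 1 n, X t ω :=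
    Finset.stronglyMeasurable_fun_sum _ fun t ht =>
      (hadapt t (mem_Icc.1 ht).1 (mem_Icc.1 ht).2).mono (ℱ.le t)
  refine (integrable_tiltProd ℱ (sub_nonneg.2 (one_le_exp hθ)) hX hadapt).mono'
    (continuous_exp.comp_stronglyMeasurable (hsum.const_mul θ)).aestronglyMeasurable
    (ae_of_all _ fun ω => ?_)
  rw [norm_of_nonneg (exp_pos _).le]
  exact exp_mul_sum_le_tiltProd hX θ n ω

lemma mgf_sum_le {θ p : ℝ} (hθ : 0 ≤ θ) (hp : 0 ≤ p) (hX : ∀ t ω, X t ω ∈ Set.Icc (0 : ℝ) 1)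
    (hadapt : ∀ t, 1 ≤ t → t ≤ n → StronglyMeasurable[ℱ t] (X t))
    (hcond : ∀ t, 1 ≤ t → t ≤ n → ∀ᵐ ω ∂μ, μ[X t | ℱ (t - 1)] ω ≤ p) :
    mgf (fun ω => ∑ t ∈ Icc 1 n, X t ω) μ θ ≤ (1 + (exp θ - 1) * p) ^ n := by
  have hs : 0 ≤ exp θ - 1 := sub_nonneg.2 (one_le_exp hθ)
  calc mgf (fun ω => ∑ t ∈ Icc 1 n, X t ω) μ θ ≤ ∫ ω, tiltProd (exp θ - 1) X n ω ∂μ :=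
        integral_mono (integrable_exp_mul_sum hθ hX hadapt) (integrable_tiltProd ℱ hs hX hadapt)
          (exp_mul_sum_le_tiltProd hX θ n)
    _ ≤ (1 + (exp θ - 1) * p) ^ n := integral_tiltProd_le ℱ hs hp hX hadapt hcond

theorem measureReal_sum_ge_le_exp_neg_klBer {p q : ℝ} (hp : 0 < p) (hpq : p ≤ q) (hq : q < 1)
    (hX : ∀ t ω, X t ω ∈ Set.Icc (0 : ℝ) 1)
    (hadapt : ∀ t, 1 ≤ t → t ≤ n → StronglyMeasurable[ℱ t] (X t))
    (hcond : ∀ t, 1 ≤ t → t ≤ n → ∀ᵐ ω ∂μ, μ[X t | ℱ (t - 1)] ω ≤ p) :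
    μ.real {ω | n * q ≤ ∑ t ∈ Icc 1 n, X t ω} ≤ exp (-n * klBer q p) := by
  set c := q * (1 - p) / (p * (1 - q)) with hc_def
  have hc : 1 ≤ c := (one_le_div (by nlinarith)).2 (by nlinarith)
  have hθ : 0 ≤ log c := log_nonneg hc
  calc μ.real {ω | n * q ≤ ∑ t ∈ Icc 1 n, X t ω}
      ≤ exp (-log c * (n * q)) * mgf (fun ω => ∑ t ∈ Icc 1 n, X t ω) μ (log c) :=
        measure_ge_le_exp_mul_mgf _ hθ (integrable_exp_mul_sum hθ hX hadapt)
    _ ≤ exp (-log c * (n * q)) * (1 + (c - 1) * p) ^ n := by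
        grw [mgf_sum_le hθ hp.le hX hadapt hcond, exp_log (by linarith)]
    _ = exp (-n * klBer q p) := by
        have hpow : (1 + (c - 1) * p) ^ n = exp (n * log (1 + (c - 1) * p)) := by
          rw [exp_nat_mul, exp_log (by nlinarith)]
        rw [hpow, ← exp_add, klBer_eq_mul_log_sub_log hp (by linarith) (by linarith) hq, ← hc_def]
        ring_nf

end Chernoff

theorem chernoff_bad_rounds
    {Ω : Type*} [m0 : MeasurableSpace Ω] (P : Measure Ω) [IsProbabilityMeasure P]
    (n : ℕ) (ℱ : Filtration ℕ m0) (A : ℕ → Set Ω)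
    (hA : ∀ t, 1 ≤ t → t ≤ n → MeasurableSet[ℱ t] (A t))
    (p0 : ℝ) (hp0 : p0 ∈ Set.Ioc (0 : ℝ) (1 / 4))
    (hcond : ∀ t, 1 ≤ t → t ≤ n →
      ∀ᵐ ω ∂P, (MeasureTheory.condExp (ℱ (t - 1)) P
        ((A t).indicator (fun _ => (1 : ℝ)))) ω ≤ p0) :
    P {ω | (n : ℝ) / 4 ≤ ∑ t ∈ Finset.Icc 1 n, (A t).indicator (fun _ => (1 : ℝ)) ω} ≤
      ENNReal.ofReal (Real.exp (-(n : ℝ) * klBer (1 / 4) p0)) := by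
  have hX : ∀ t ω, (A t).indicator (fun _ => (1 : ℝ)) ω ∈ Set.Icc (0 : ℝ) 1 := fun t ω => by
    by_cases h : ω ∈ A t <;> simp [h]
  have hbound := measureReal_sum_ge_le_exp_neg_klBer (μ := P) hp0.1 hp0.2 (by norm_num) hX
    (fun t ht1 htn => stronglyMeasurable_const.indicator (hA t ht1 htn)) hcond
  rw [div_eq_mul_one_div, ← ENNReal.ofReal_toReal (measure_ne_top P _)]
  exact ENNReal.ofReal_le_ofReal hbound
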